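/- Let (X, d) be a nonempty finite metric space and p, q ∈ Δ^X. Then the 1-Wasserstein distance W₁(p,q), defined as the minimum over couplings γ of (p,q) of Σ_{x,y} d(x,y)·γ(x,y), equals the maximum over all 1-Lipschitz functions f : X → ℝ (i.e. |f(x) − f(y)| ≤ d(x,y) for all x,y) of Σ_x f(x)·( p(x) − q(x) ). -/

import Mathlib

/-!
Weak duality is the identity `∑ₓ f x (p x - q x) = ∑ₓ,ᵧ γ x y (f x - f y)` for a coupling `γ`.
Both extrema are attained by compactness: couplings form a compact set, and since `∑ p = ∑ q` the
dual objective is invariant under adding constants, so one may maximize over the compact set of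
1-Lipschitz functions vanishing at a base point.

For strong duality, suppose every coupling costs more than `c`. Then `(p, q, c)` lies outside the
convex hull of the points `(δₓ, δᵧ, d(x, y))`, and a separating functional `(u, v, β)` has `β < 0`.
Rescaled, it yields potentials with `g x ≤ h y + d(x, y)` and `∑ g p - ∑ h q > c`; the
inf-convolution `f x = ⨅ y, h y + d(x, y)` is 1-Lipschitz and lies between `g` and `h`, so its
dual value also exceeds `c`.
-/

open Finset

theorem lipschitzWith_one_iff_abs_sub_le {Y : Type*} [PseudoMetricSpace Y] {f : Y → ℝ} :
    LipschitzWith 1 f ↔ ∀ x y, |f x - f y| ≤ dist x y := by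
  simp [lipschitzWith_iff_dist_le_mul, Real.dist_eq]

theorem exists_lipschitzWith_one_between {Y : Type*} [PseudoMetricSpace Y] [Nonempty Y]
    {g h : Y → ℝ} (hgh : ∀ x y, g x ≤ h y + dist x y) :
    ∃ f : Y → ℝ, LipschitzWith 1 f ∧ g ≤ f ∧ f ≤ h := by
  have hbdd (x : Y) : BddBelow (Set.range fun y => h y + dist x y) :=
    ⟨g x, Set.forall_mem_range.2 (hgh x)⟩
  refine ⟨fun x => ⨅ y, h y + dist x y, .of_le_add fun x y => ?_,
    fun x => le_ciInf (hgh x), fun x => (ciInf_le (hbdd x) x).trans (by simp)⟩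
  have : (⨅ z, h z + dist x z) - dist x y ≤ ⨅ z, h z + dist y z :=
    le_ciInf fun z => by linarith [ciInf_le (hbdd x) z, dist_triangle x y z]
  linarith

theorem exists_lipschitzWith_one_forall_sum_mul_le {X : Type*} [Fintype X] [PseudoMetricSpace X]
    [Nonempty X] (w : X → ℝ) (hw : ∑ x, w x = 0) :
    ∃ f₀ : X → ℝ, LipschitzWith 1 f₀ ∧
      ∀ f : X → ℝ, LipschitzWith 1 f → ∑ x, f x * w x ≤ ∑ x, f₀ x * w x := by
  obtain ⟨x₀⟩ := ‹Nonempty X›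
  set K := {f : X → ℝ | LipschitzWith 1 f ∧ f x₀ = 0}
  have hK : IsCompact K := by
    refine isCompact_Icc (a := fun x => -dist x x₀) (b := fun x => dist x x₀)
      |>.of_isClosed_subset ((isClosed_setOfPred_lipschitzWith 1).inter
        (isClosed_eq (continuous_apply x₀) continuous_const)) fun f ⟨hf, hf₀⟩ => ?_
    have hbound (x : X) := hf.dist_le_mul x x₀
    simp only [Real.dist_eq, hf₀, sub_zero, NNReal.coe_one, one_mul, abs_le] at hbound
    exact ⟨fun x => (hbound x).1, fun x => (hbound x).2⟩
  obtain ⟨f₀, hf₀, hmax⟩ := hK.exists_isMaxOn ⟨0, LipschitzWith.const' 0, rfl⟩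
    (by fun_prop : Continuous fun f : X → ℝ => ∑ x, f x * w x).continuousOn
  refine ⟨f₀, hf₀.1, fun f hf => ?_⟩
  have hshift : (fun x => f x - f x₀) ∈ K :=
    ⟨by simpa using hf.sub (LipschitzWith.const (f x₀)), sub_self _⟩
  calc ∑ x, f x * w x = ∑ x, (f x - f x₀) * w x := by
        simp [sub_mul, sum_sub_distrib, ← mul_sum, hw]
    _ ≤ ∑ x, f₀ x * w x := hmax hshift

theorem exists_separation_of_notMem_image_stdSimplex {ι E : Type*} [Fintype ι]
    [AddCommGroup E] [Module ℝ E] [TopologicalSpace E] [IsTopologicalAddGroup E]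
    [ContinuousSMul ℝ E] [LocallyConvexSpace ℝ E] [T2Space E] (a : ι → E) {z : E}
    (hz : z ∉ (fun w : ι → ℝ => ∑ i, w i • a i) '' stdSimplex ℝ ι) :
    ∃ (F : StrongDual ℝ E) (s : ℝ),
      (∀ w ∈ stdSimplex ℝ ι, F (∑ i, w i • a i) < s) ∧ s < F z := by
  have hcont : Continuous fun w : ι → ℝ => ∑ i, w i • a i := by fun_prop
  have hconv : Convex ℝ ((fun w : ι → ℝ => ∑ i, w i • a i) '' stdSimplex ℝ ι) := by
    convert (convex_stdSimplex ℝ ι).linear_image (Fintype.linearCombination ℝ a)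
    exact (Fintype.linearCombination_apply ℝ a _).symm
  obtain ⟨F, s, hlt, hs⟩ := geometric_hahn_banach_closed_point hconv
    ((isCompact_stdSimplex ℝ ι).image hcont).isClosed hz
  exact ⟨F, s, fun w hw => hlt _ (Set.mem_image_of_mem _ hw), hs⟩

theorem apply_prod_eq_sum {ι R : Type*} [Fintype ι] [DecidableEq ι] [CommSemiring R]
    (F : (ι → R) × (ι → R) × R →ₗ[R] R) (r s : ι → R) (t : R) :
    F (r, s, t) = ∑ i, r i * F (Pi.single i 1, 0, 0) + ∑ i, s i * F (0, Pi.single i 1, 0) +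
      t * F (0, 0, 1) := by
  have : (r, s, t) = ∑ i, r i • ((Pi.single i 1, 0, 0) : (ι → R) × (ι → R) × R) +
      ∑ i, s i • ((0, Pi.single i 1, 0) : (ι → R) × (ι → R) × R) + t • (0, 0, 1) := by
    ext <;> simp [Prod.fst_sum, Prod.snd_sum, Pi.single_apply]
  conv_lhs => rw [this]
  simp only [map_add, map_sum, map_smul, smul_eq_mul]

namespace FiniteTransport

variable {X : Type*} [Fintype X]

def couplings (p q : X → ℝ) : Set (X → X → ℝ) :=
  {γ | (∀ x y, 0 ≤ γ x y) ∧ (∀ x, ∑ y, γ x y = p x) ∧ (∀ y, ∑ x, γ x y = q y)}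

def transportCost [Dist X] (γ : X → X → ℝ) : ℝ :=
  ∑ x, ∑ y, dist x y * γ x y

theorem sum_sum_mul_add_eq_of_marginals {p q : X → ℝ} {γ : X → X → ℝ}
    (hrow : ∀ x, ∑ y, γ x y = p x) (hcol : ∀ y, ∑ x, γ x y = q y) (u v : X → ℝ) :
    ∑ x, ∑ y, γ x y * (u x + v y) = ∑ x, p x * u x + ∑ y, q y * v y := by
  simp only [mul_add, sum_add_distrib, ← hrow, ← hcol, sum_mul]
  rw [sum_comm (f := fun y x => γ x y * v y)]

theorem sum_mul_sub_le_transportCost [PseudoMetricSpace X] {p q f : X → ℝ} {γ : X → X → ℝ}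
    (hγ : γ ∈ couplings p q) (hf : LipschitzWith 1 f) :
    ∑ x, f x * (p x - q x) ≤ transportCost γ := by
  obtain ⟨hγ₀, hrow, hcol⟩ := hγ
  calc ∑ x, f x * (p x - q x) = ∑ x, ∑ y, γ x y * (f x + -f y) := by
        rw [sum_sum_mul_add_eq_of_marginals hrow hcol, ← sum_add_distrib]
        exact sum_congr rfl fun x _ => by ring
    _ ≤ ∑ x, ∑ y, γ x y * dist x y := by
        gcongr with x _ y _
        · exact hγ₀ x y
        · rw [← sub_eq_add_neg]
          exact (le_abs_self _).trans (lipschitzWith_one_iff_abs_sub_le.1 hf x y)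
    _ = transportCost γ := by simp only [transportCost, mul_comm]

theorem isCompact_couplings (p q : X → ℝ) : IsCompact (couplings p q) := by
  refine isCompact_Icc (a := 0) (b := fun x _ => p x) |>.of_isClosed_subset ?_
    fun γ ⟨hγ₀, hrow, _⟩ => ⟨fun x y => hγ₀ x y, fun x y => ?_⟩
  · simp only [couplings, Set.ofPred_and, Set.ofPred_forall]
    exact .inter (isClosed_iInter fun x => isClosed_iInter fun y =>
        isClosed_le (by fun_prop) (by fun_prop))
      (.inter (isClosed_iInter fun x => isClosed_eq (by fun_prop) (by fun_prop))
        (isClosed_iInter fun y => isClosed_eq (by fun_prop) (by fun_prop)))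
  · exact (single_le_sum (fun y _ => hγ₀ x y) (mem_univ y)).trans_eq (hrow x)

theorem mul_mem_couplings {p q : X → ℝ} (hp : p ∈ stdSimplex ℝ X) (hq : q ∈ stdSimplex ℝ X) :
    (fun x y => p x * q y) ∈ couplings p q :=
  ⟨fun x y => mul_nonneg (hp.1 x) (hq.1 y), fun x => by rw [← mul_sum, hq.2, mul_one],
    fun y => by rw [← sum_mul, hp.2, one_mul]⟩

theorem continuous_transportCost [Dist X] : Continuous (transportCost (X := X)) := by
  unfold transportCost; fun_prop

theorem exists_isMinOn_transportCost [Dist X] {p q : X → ℝ} (hp : p ∈ stdSimplex ℝ X)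
    (hq : q ∈ stdSimplex ℝ X) : ∃ γ ∈ couplings p q, IsMinOn transportCost (couplings p q) γ :=
  (isCompact_couplings p q).exists_isMinOn ⟨_, mul_mem_couplings hp hq⟩
    continuous_transportCost.continuousOn

def transportPoint [Dist X] [DecidableEq X] (x y : X) : (X → ℝ) × (X → ℝ) × ℝ :=
  (Pi.single x 1, Pi.single y 1, dist x y)

theorem sum_sum_smul_transportPoint [Dist X] [DecidableEq X] (γ : X → X → ℝ) :
    ∑ x, ∑ y, γ x y • transportPoint x y =
      (fun x => ∑ y, γ x y, fun y => ∑ x, γ x y, transportCost γ) := by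
  ext z
  · simp [transportPoint, Prod.fst_sum, Pi.single_apply]
  · rw [sum_comm]; simp [transportPoint, Prod.snd_sum, Prod.fst_sum, Pi.single_apply]
  · simp [transportPoint, transportCost, Prod.snd_sum, mul_comm]

theorem notMem_image_stdSimplex_of_lt_transportCost [Dist X] [DecidableEq X] {p q : X → ℝ}
    {c : ℝ} (hc : ∀ γ ∈ couplings p q, c < transportCost γ) :
    (p, q, c) ∉ (fun w : X × X → ℝ => ∑ i, w i • transportPoint i.1 i.2) ''
      stdSimplex ℝ (X × X) := by
  rintro ⟨w, ⟨hw₀, -⟩, hwz⟩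
  simp only [Fintype.sum_prod_type, sum_sum_smul_transportPoint, Prod.mk.injEq] at hwz
  obtain ⟨hrow, hcol, hcost⟩ := hwz
  exact (hc _ ⟨fun x y => hw₀ _, congrFun hrow, congrFun hcol⟩).ne hcost.symm

theorem exists_potentials_gt_of_neg_multiplier [Dist X] {p q u v : X → ℝ} {β s c : ℝ}
    (hq : ∑ y, q y = 1) (hβ : β < 0) (hvertex : ∀ x y, u x + v y + dist x y * β < s)
    (hs : s < ∑ x, p x * u x + ∑ y, q y * v y + c * β) :
    ∃ g h : X → ℝ, (∀ x y, g x ≤ h y + dist x y) ∧ c < ∑ x, g x * p x - ∑ y, h y * q y := by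
  have hα : 0 < -β := neg_pos.2 hβ
  refine ⟨fun x => u x / -β, fun y => (s - v y) / -β, fun x y => ?_, ?_⟩
  · rw [div_add' _ _ _ hα.ne', div_le_div_iff_of_pos_right hα]
    linarith [hvertex x y]
  · have hsq : ∑ y, s * q y = s := by rw [← mul_sum, hq, mul_one]
    have : ∑ x, u x / -β * p x - ∑ y, (s - v y) / -β * q y =
        (∑ x, p x * u x + ∑ y, q y * v y - s) / -β := by
      simp only [div_mul_eq_mul_div, ← sum_div, ← sub_div, sub_mul, sum_sub_distrib, hsq,
        mul_comm (u _), mul_comm (v _)]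
      ring
    rw [this, lt_div_iff₀ hα]
    linarith

theorem exists_potentials_gt_of_lt_transportCost [PseudoMetricSpace X] {p q : X → ℝ} {c : ℝ}
    (hp : p ∈ stdSimplex ℝ X) (hq : q ∈ stdSimplex ℝ X)
    (hc : ∀ γ ∈ couplings p q, c < transportCost γ) :
    ∃ g h : X → ℝ, (∀ x y, g x ≤ h y + dist x y) ∧ c < ∑ x, g x * p x - ∑ y, h y * q y := by
  classical
  obtain ⟨F, s, hlt, hs⟩ := exists_separation_of_notMem_image_stdSimplex _
    (notMem_image_stdSimplex_of_lt_transportCost hc)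
  set u : X → ℝ := fun x => F (Pi.single x 1, 0, 0)
  set v : X → ℝ := fun y => F (0, Pi.single y 1, 0)
  set β := F (0, 0, 1)
  have hF (r r' : X → ℝ) (t : ℝ) : F (r, r', t) = ∑ x, r x * u x + ∑ y, r' y * v y + t * β :=
    apply_prod_eq_sum F.toLinearMap r r' t
  have hvertex (x y : X) : u x + v y + dist x y * β < s := by
    simpa [transportPoint, hF, Pi.single_apply] using
      hlt (Pi.single (x, y) 1) (single_mem_stdSimplex ℝ _)
  set γ₁ : X → X → ℝ := fun x y => p x * q y
  have hγ₁ : γ₁ ∈ couplings p q := mul_mem_couplings hp hq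
  have hγ₁_lt : ∑ x, p x * u x + ∑ y, q y * v y + transportCost γ₁ * β < s := by
    have hw₁ : Function.uncurry γ₁ ∈ stdSimplex ℝ (X × X) :=
      ⟨fun i => hγ₁.1 i.1 i.2, by simp [Fintype.sum_prod_type, hγ₁.2.1, hp.2]⟩
    have := hlt _ hw₁
    simp only [Fintype.sum_prod_type, Function.uncurry_apply_pair,
      sum_sum_smul_transportPoint] at this
    rwa [funext hγ₁.2.1, funext hγ₁.2.2, hF] at this
  rw [hF] at hs
  -- `(p, q, transportCost γ₁)` and `(p, q, c)` differ only in the cost coordinate, where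
  -- `c < transportCost γ₁`, yet lie on opposite sides of the separating hyperplane.
  have hβ : β < 0 := by nlinarith [hc γ₁ hγ₁]
  exact exists_potentials_gt_of_neg_multiplier hq.2 hβ hvertex hs

theorem exists_lipschitzWith_one_gt_of_lt_transportCost [PseudoMetricSpace X] [Nonempty X]
    {p q : X → ℝ} {c : ℝ} (hp : p ∈ stdSimplex ℝ X) (hq : q ∈ stdSimplex ℝ X)
    (hc : ∀ γ ∈ couplings p q, c < transportCost γ) :
    ∃ f : X → ℝ, LipschitzWith 1 f ∧ c < ∑ x, f x * (p x - q x) := by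
  obtain ⟨g, h, hgh, hlt⟩ := exists_potentials_gt_of_lt_transportCost hp hq hc
  obtain ⟨f, hf, hgf, hfh⟩ := exists_lipschitzWith_one_between hgh
  refine ⟨f, hf, hlt.trans_le ?_⟩
  calc ∑ x, g x * p x - ∑ y, h y * q y ≤ ∑ x, f x * p x - ∑ x, f x * q x := by
        gcongr with x _ x _
        exacts [hp.1 x, hgf x, hq.1 x, hfh x]
    _ = ∑ x, f x * (p x - q x) := by simp only [mul_sub, sum_sub_distrib]

end FiniteTransport

open FiniteTransport

/-- **Kantorovich–Rubinstein duality for the 1-Wasserstein distance on a finite metric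
space.**  For `p, q ∈ Δ^X`, the minimum over couplings `γ` of `(p,q)` of
`Σ_{x,y} d(x,y)·γ(x,y)` equals the maximum over 1-Lipschitz functions `f : X → ℝ` of
`Σ_x f(x)(p(x) − q(x))`. -/
theorem kantorovich_rubinstein_finite
    (X : Type*) [Fintype X] [Nonempty X] [MetricSpace X]
    (p q : X → ℝ) (hp : p ∈ stdSimplex ℝ X) (hq : q ∈ stdSimplex ℝ X) :
    ∃ m : ℝ,
      IsLeast {t : ℝ | ∃ γ : X → X → ℝ,
          (∀ x y, 0 ≤ γ x y) ∧
          (∀ x, ∑ y, γ x y = p x) ∧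
          (∀ y, ∑ x, γ x y = q y) ∧
          t = ∑ x, ∑ y, dist x y * γ x y} m ∧
      IsGreatest {t : ℝ | ∃ f : X → ℝ,
          (∀ x y, |f x - f y| ≤ dist x y) ∧
          t = ∑ x, f x * (p x - q x)} m := by
  obtain ⟨γ₀, hγ₀, hmin⟩ := exists_isMinOn_transportCost hp hq
  rw [isMinOn_iff] at hmin
  obtain ⟨f₀, hf₀, hmax⟩ := exists_lipschitzWith_one_forall_sum_mul_le (fun x => p x - q x)
    (by rw [sum_sub_distrib, hp.2, hq.2, sub_self])
  have hstrong : transportCost γ₀ ≤ ∑ x, f₀ x * (p x - q x) :=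
    le_of_forall_pos_lt_add fun ε hε => by
      obtain ⟨f, hf, hlt⟩ := exists_lipschitzWith_one_gt_of_lt_transportCost
        (c := transportCost γ₀ - ε) hp hq fun γ hγ => by linarith [hmin γ hγ]
      linarith [hmax f hf]
  refine ⟨transportCost γ₀, ⟨⟨γ₀, hγ₀.1, hγ₀.2.1, hγ₀.2.2, rfl⟩, ?_⟩,
    ⟨⟨f₀, lipschitzWith_one_iff_abs_sub_le.1 hf₀,
      le_antisymm hstrong (sum_mul_sub_le_transportCost hγ₀ hf₀)⟩, ?_⟩⟩
  · rintro _ ⟨γ, hnonneg, hrow, hcol, rfl⟩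
    exact hmin γ ⟨hnonneg, hrow, hcol⟩
  · rintro _ ⟨f, hf, rfl⟩
    exact sum_mul_sub_le_transportCost hγ₀ (lipschitzWith_one_iff_abs_sub_le.2 hf)
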